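/- For κ in the positive cone Γ_n ⊂ ℝ^n with F(κ) := H_k(κ)^{1/k}, the function F is inverse concave in the sense that κ ↦ 1/F(1/κ_1, ..., 1/κ_n) is concave on Γ_n; in particular, for any ξ = (ξ_1, ..., ξ_n) ∈ ℝ^n, Σ_{k,l} (∂²F/∂κ_k∂κ_l) ξ_k ξ_l + 2 Σ_k (∂F/∂κ_k)(1/κ_k) ξ_k^2 ≥ (2/F)(Σ_k (∂F/∂κ_k) ξ_k)^2. -/

import Mathlib

open Finset Real

/-- k-th elementary symmetric polynomial of κ ∈ ℝⁿ. -/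
noncomputable def esymm (n : ℕ) (k : ℕ) (κ : Fin n → ℝ) : ℝ :=
  ∑ s ∈ Finset.univ.powersetCard k, ∏ i ∈ s, κ i

/-- k-th elementary symmetric polynomial of κ with the i-th entry deleted. -/
noncomputable def esymmDel (n : ℕ) (i : Fin n) (k : ℕ) (κ : Fin n → ℝ) : ℝ :=
  ∑ s ∈ (Finset.univ.erase i).powersetCard k, ∏ j ∈ s, κ j

/-- Normalized k-th elementary symmetric polynomial H_k = σ_k / C(n,k). -/
noncomputable def Hnorm (n : ℕ) (k : ℕ) (κ : Fin n → ℝ) : ℝ :=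
  esymm n k κ / (n.choose k)

/-- The curvature function F = H_k^{1/k}. -/
noncomputable def Fcurv (n k : ℕ) (κ : Fin n → ℝ) : ℝ :=
  (Hnorm n k κ) ^ ((1 : ℝ) / k)

/-- F^{ii} : the partial derivative of F with respect to κ_i. -/
noncomputable def Fd (n k : ℕ) (κ : Fin n → ℝ) (i : Fin n) : ℝ :=
  fderiv ℝ (Fcurv n k) κ (Pi.single i 1)

lemma esymm_contDiff (n k : ℕ) : ContDiff ℝ 2 (esymm n k) := by
  unfold esymm
  apply ContDiff.sum
  intro s _
  apply contDiff_prod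
  intro i _
  exact (ContinuousLinearMap.proj i : (Fin n → ℝ) →L[ℝ] ℝ).contDiff

lemma esymm_pos {n k : ℕ} (hkn : k ≤ n) {κ : Fin n → ℝ} (hκ : ∀ i, 0 < κ i) :
    0 < esymm n k κ := by
  unfold esymm
  apply Finset.sum_pos
  · intro s _
    exact Finset.prod_pos fun i _ => hκ i
  · exact Finset.powersetCard_nonempty.2 (by simpa using hkn)

lemma hnorm_pos {n k : ℕ} (hkn : k ≤ n) {κ : Fin n → ℝ} (hκ : ∀ i, 0 < κ i) :
    0 < Hnorm n k κ :=
  div_pos (esymm_pos hkn hκ) (by exact_mod_cast Nat.choose_pos hkn)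

lemma hnorm_contDiff (n k : ℕ) : ContDiff ℝ 2 (Hnorm n k) :=
  (esymm_contDiff n k).div_const _

lemma fcurv_pos {n k : ℕ} (hkn : k ≤ n) {κ : Fin n → ℝ} (hκ : ∀ i, 0 < κ i) :
    0 < Fcurv n k κ :=
  Real.rpow_pos_of_pos (hnorm_pos hkn hκ) _

lemma fcurv_contDiffAt {n k : ℕ} (hkn : k ≤ n) {κ : Fin n → ℝ} (hκ : ∀ i, 0 < κ i) :
    ContDiffAt ℝ 2 (Fcurv n k) κ := by
  unfold Fcurv
  exact ((hnorm_contDiff n k).contDiffAt).rpow_const_of_ne (ne_of_gt (hnorm_pos hkn hκ))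

lemma holder2 {ι : Type*} (S : Finset ι) (f g : ι → ℝ) (hf : ∀ i ∈ S, 0 < f i)
    (hg : ∀ i ∈ S, 0 < g i) {a b : ℝ} (ha : 0 ≤ a) (hb : 0 ≤ b) (hab : a + b = 1) :
    ∑ i ∈ S, f i ^ a * g i ^ b ≤ (∑ i ∈ S, f i) ^ a * (∑ i ∈ S, g i) ^ b := by
  rcases S.eq_empty_or_nonempty with rfl | hS
  · simp
    positivity
  have hA : 0 < ∑ i ∈ S, f i := Finset.sum_pos hf hS
  have hB : 0 < ∑ i ∈ S, g i := Finset.sum_pos hg hS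
  set A := ∑ i ∈ S, f i with hAdef
  set B := ∑ i ∈ S, g i with hBdef
  have key : ∀ i ∈ S, f i ^ a * g i ^ b ≤ A ^ a * B ^ b * (a * (f i / A) + b * (g i / B)) := by
    intro i hi
    have h1 : (f i / A) ^ a * (g i / B) ^ b ≤ a * (f i / A) + b * (g i / B) :=
      Real.geom_mean_le_arith_mean2_weighted ha hb
        (div_nonneg (hf i hi).le hA.le) (div_nonneg (hg i hi).le hB.le) hab
    have h2 : f i ^ a * g i ^ b = A ^ a * B ^ b * ((f i / A) ^ a * (g i / B) ^ b) := by
      rw [Real.div_rpow (hf i hi).le hA.le, Real.div_rpow (hg i hi).le hB.le]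
      have hAa : A ^ a ≠ 0 := by positivity
      have hBb : B ^ b ≠ 0 := by positivity
      field_simp
    rw [h2]
    exact mul_le_mul_of_nonneg_left h1 (by positivity)
  calc ∑ i ∈ S, f i ^ a * g i ^ b
      ≤ ∑ i ∈ S, A ^ a * B ^ b * (a * (f i / A) + b * (g i / B)) := Finset.sum_le_sum key
    _ = A ^ a * B ^ b := by
        rw [← Finset.mul_sum, Finset.sum_add_distrib]
        have e1 : ∑ i ∈ S, a * (f i / A) = a := by
          rw [← Finset.mul_sum, ← Finset.sum_div, ← hAdef, div_self hA.ne', mul_one]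
        have e2 : ∑ i ∈ S, b * (g i / B) = b := by
          rw [← Finset.mul_sum, ← Finset.sum_div, ← hBdef, div_self hB.ne', mul_one]
        rw [e1, e2, hab, mul_one]

lemma prod_inv_le {n : ℕ} (T : Finset (Fin n)) {x y : Fin n → ℝ}
    (hx : ∀ i, 0 < x i) (hy : ∀ i, 0 < y i) {a b : ℝ} (ha : 0 ≤ a) (hb : 0 ≤ b)
    (hab : a + b = 1) :
    ∏ i ∈ T, (a * x i + b * y i)⁻¹ ≤ (∏ i ∈ T, (x i)⁻¹) ^ a * (∏ i ∈ T, (y i)⁻¹) ^ b := by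
  have key : ∀ i ∈ T, (a * x i + b * y i)⁻¹ ≤ ((x i)⁻¹) ^ a * ((y i)⁻¹) ^ b := by
    intro i _
    have hgm : x i ^ a * y i ^ b ≤ a * x i + b * y i :=
      Real.geom_mean_le_arith_mean2_weighted ha hb (hx i).le (hy i).le hab
    have hpos : 0 < x i ^ a * y i ^ b :=
      mul_pos (Real.rpow_pos_of_pos (hx i) _) (Real.rpow_pos_of_pos (hy i) _)
    have h := one_div_le_one_div_of_le hpos hgm
    rw [one_div, one_div, mul_inv, ← Real.inv_rpow (hx i).le, ← Real.inv_rpow (hy i).le] at h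
    exact h
  calc ∏ i ∈ T, (a * x i + b * y i)⁻¹
      ≤ ∏ i ∈ T, ((x i)⁻¹) ^ a * ((y i)⁻¹) ^ b :=
        Finset.prod_le_prod (fun i _ => inv_nonneg.2
          (add_nonneg (mul_nonneg ha (hx i).le) (mul_nonneg hb (hy i).le))) key
    _ = (∏ i ∈ T, (x i)⁻¹) ^ a * (∏ i ∈ T, (y i)⁻¹) ^ b := by
        rw [Finset.prod_mul_distrib,
          Real.finset_prod_rpow _ _ (fun i _ => inv_nonneg.2 (hx i).le) _,
          Real.finset_prod_rpow _ _ (fun i _ => inv_nonneg.2 (hy i).le) _]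

lemma einv_logconvex {n m : ℕ} {x y : Fin n → ℝ} (hx : ∀ i, 0 < x i) (hy : ∀ i, 0 < y i)
    {a b : ℝ} (ha : 0 ≤ a) (hb : 0 ≤ b) (hab : a + b = 1) :
    esymm n m (fun i => ((a • x + b • y) i)⁻¹) ≤
      (esymm n m fun i => (x i)⁻¹) ^ a * (esymm n m fun i => (y i)⁻¹) ^ b := by
  unfold esymm
  have step1 : ∀ T ∈ Finset.univ.powersetCard m,
      ∏ i ∈ T, ((a • x + b • y) i)⁻¹ ≤
        (∏ i ∈ T, (x i)⁻¹) ^ a * (∏ i ∈ T, (y i)⁻¹) ^ b := by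
    intro T _
    have : ∀ i ∈ T, ((a • x + b • y) i)⁻¹ = (a * x i + b * y i)⁻¹ := by
      intro i _; simp [Pi.add_apply, Pi.smul_apply, smul_eq_mul]
    rw [Finset.prod_congr rfl this]
    exact prod_inv_le T hx hy ha hb hab
  calc ∑ T ∈ Finset.univ.powersetCard m, ∏ i ∈ T, ((a • x + b • y) i)⁻¹
      ≤ ∑ T ∈ Finset.univ.powersetCard m,
          (∏ i ∈ T, (x i)⁻¹) ^ a * (∏ i ∈ T, (y i)⁻¹) ^ b := Finset.sum_le_sum step1
    _ ≤ _ := holder2 _ _ _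
          (fun T _ => Finset.prod_pos fun i _ => inv_pos.2 (hx i))
          (fun T _ => Finset.prod_pos fun i _ => inv_pos.2 (hy i)) ha hb hab

lemma einv_smul {n m : ℕ} {c : ℝ} (hc : c ≠ 0) (z : Fin n → ℝ) :
    esymm n m (fun i => ((c • z) i)⁻¹) = (c⁻¹) ^ m * esymm n m (fun i => (z i)⁻¹) := by
  unfold esymm
  rw [Finset.mul_sum]
  refine Finset.sum_congr rfl fun T hT => ?_
  have hcard : T.card = m := (Finset.mem_powersetCard.1 hT).2
  calc ∏ i ∈ T, ((c • z) i)⁻¹ = ∏ i ∈ T, c⁻¹ * (z i)⁻¹ := by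
        refine Finset.prod_congr rfl fun i _ => ?_
        simp [Pi.smul_apply, smul_eq_mul, mul_inv, mul_comm]
    _ = (c⁻¹) ^ m * ∏ i ∈ T, (z i)⁻¹ := by
        rw [Finset.prod_mul_distrib, Finset.prod_const, hcard]

noncomputable def gfun (n m : ℕ) (z : Fin n → ℝ) : ℝ := (Fcurv n m fun i => (z i)⁻¹)⁻¹

lemma gfun_pos {n m : ℕ} (hmn : m ≤ n) {z : Fin n → ℝ} (hz : ∀ i, 0 < z i) :
    0 < gfun n m z :=
  inv_pos.2 (fcurv_pos hmn fun i => inv_pos.2 (hz i))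

lemma gfun_eq {n m : ℕ} {z : Fin n → ℝ} (hz : ∀ i, 0 < z i) (hmn : m ≤ n) :
    gfun n m z = (esymm n m (fun i => (z i)⁻¹) / (n.choose m)) ^ (-(1 / (m : ℝ))) := by
  have hE : 0 < esymm n m (fun i => (z i)⁻¹) := esymm_pos hmn fun i => inv_pos.2 (hz i)
  have hC : (0:ℝ) < (n.choose m : ℝ) := by exact_mod_cast Nat.choose_pos hmn
  unfold gfun Fcurv Hnorm
  rw [Real.rpow_neg (by positivity)]

lemma gfun_logconc {n m : ℕ} (hm1 : 1 ≤ m) (hmn : m ≤ n) {x y : Fin n → ℝ}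
    (hx : ∀ i, 0 < x i) (hy : ∀ i, 0 < y i) {a b : ℝ} (ha : 0 ≤ a) (hb : 0 ≤ b)
    (hab : a + b = 1) :
    gfun n m x ^ a * gfun n m y ^ b ≤ gfun n m (a • x + b • y) := by
  have hxy : ∀ i, 0 < (a • x + b • y) i := by
    intro i
    have h1 : x i ^ a * y i ^ b ≤ a * x i + b * y i :=
      Real.geom_mean_le_arith_mean2_weighted ha hb (hx i).le (hy i).le hab
    have h2 : 0 < x i ^ a * y i ^ b :=
      mul_pos (Real.rpow_pos_of_pos (hx i) _) (Real.rpow_pos_of_pos (hy i) _)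
    simpa [Pi.add_apply, Pi.smul_apply, smul_eq_mul] using lt_of_lt_of_le h2 h1
  rw [gfun_eq hx hmn, gfun_eq hy hmn, gfun_eq hxy hmn]
  have hC : (0:ℝ) < (n.choose m : ℝ) := by exact_mod_cast Nat.choose_pos hmn
  have hEx : 0 < esymm n m (fun i => (x i)⁻¹) := esymm_pos hmn fun i => inv_pos.2 (hx i)
  have hEy : 0 < esymm n m (fun i => (y i)⁻¹) := esymm_pos hmn fun i => inv_pos.2 (hy i)
  have hEm : 0 < esymm n m (fun i => ((a • x + b • y) i)⁻¹) :=
    esymm_pos hmn fun i => inv_pos.2 (hxy i)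
  set Ex := esymm n m (fun i => (x i)⁻¹)
  set Ey := esymm n m (fun i => (y i)⁻¹)
  set Em := esymm n m (fun i => ((a • x + b • y) i)⁻¹)
  have hdiv : Em / (n.choose m : ℝ) ≤ (Ex / (n.choose m : ℝ)) ^ a * (Ey / (n.choose m : ℝ)) ^ b := by
    have h1 : Em ≤ Ex ^ a * Ey ^ b := einv_logconvex hx hy ha hb hab
    rw [Real.div_rpow hEx.le hC.le, Real.div_rpow hEy.le hC.le]
    have hCsplit : (n.choose m : ℝ) ^ a * (n.choose m : ℝ) ^ b = (n.choose m : ℝ) := by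
      rw [← Real.rpow_add hC, hab, Real.rpow_one]
    calc Em / (n.choose m : ℝ) ≤ (Ex ^ a * Ey ^ b) / (n.choose m : ℝ) := by
          gcongr
      _ = Ex ^ a / (n.choose m : ℝ) ^ a * (Ey ^ b / (n.choose m : ℝ) ^ b) := by
          rw [div_mul_div_comm, hCsplit]
  have hbase : 0 < Em / (n.choose m : ℝ) := by positivity
  have hm0 : (0:ℝ) < (m:ℝ) := by exact_mod_cast hm1
  have hr : -(1 / (m:ℝ)) ≤ 0 := neg_nonpos.2 (by positivity)
  have hmono := Real.rpow_le_rpow_of_nonpos hbase hdiv hr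
  refine le_trans (le_of_eq ?_) hmono
  have hx' : (0:ℝ) ≤ Ex / (n.choose m : ℝ) := by positivity
  have hy' : (0:ℝ) ≤ Ey / (n.choose m : ℝ) := by positivity
  rw [Real.mul_rpow (Real.rpow_nonneg hx' _) (Real.rpow_nonneg hy' _),
    ← Real.rpow_mul hx', ← Real.rpow_mul hy', mul_comm (-(1 / (m:ℝ))) a,
    mul_comm (-(1 / (m:ℝ))) b, Real.rpow_mul hx', Real.rpow_mul hy']

lemma gfun_smul {n m : ℕ} (hm1 : 1 ≤ m) (hmn : m ≤ n) {c : ℝ} (hc : 0 < c)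
    {z : Fin n → ℝ} (hz : ∀ i, 0 < z i) : gfun n m (c • z) = c * gfun n m z := by
  have hcz : ∀ i, 0 < (c • z) i := fun i => by
    simpa [Pi.smul_apply, smul_eq_mul] using mul_pos hc (hz i)
  rw [gfun_eq hcz hmn, gfun_eq hz hmn, einv_smul hc.ne']
  have hC : (0:ℝ) < (n.choose m : ℝ) := by exact_mod_cast Nat.choose_pos hmn
  have hE : 0 < esymm n m (fun i => (z i)⁻¹) := esymm_pos hmn fun i => inv_pos.2 (hz i)
  set E := esymm n m (fun i => (z i)⁻¹)
  have h1 : (c⁻¹) ^ m * E / (n.choose m : ℝ) = (c⁻¹) ^ m * (E / (n.choose m : ℝ)) :=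
    mul_div_assoc _ _ _
  rw [h1, Real.mul_rpow (by positivity) (by positivity)]
  congr 1
  have hm0 : (m:ℝ) ≠ 0 := by
    have : 0 < m := hm1
    exact_mod_cast this.ne'
  rw [← Real.rpow_natCast c⁻¹ m, ← Real.rpow_mul (inv_pos.2 hc).le,
    show (m:ℝ) * (-(1 / (m:ℝ))) = -1 by field_simp,
    Real.rpow_neg_one, inv_inv]

lemma convex_pos_cone (n : ℕ) : Convex ℝ {κ : Fin n → ℝ | ∀ i, 0 < κ i} := by
  intro x hx y hy a b ha hb hab
  intro i
  rcases eq_or_lt_of_le ha with rfl | ha'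
  · simp only [zero_add] at hab
    simpa [Pi.add_apply, Pi.smul_apply, smul_eq_mul, hab] using hy i
  · have h1 : 0 < a * x i := mul_pos ha' (hx i)
    have h2 : 0 ≤ b * y i := mul_nonneg hb (hy i).le
    simpa [Pi.add_apply, Pi.smul_apply, smul_eq_mul] using add_pos_of_pos_of_nonneg h1 h2

lemma gfun_concave {n m : ℕ} (hm1 : 1 ≤ m) (hmn : m ≤ n) :
    ConcaveOn ℝ {κ : Fin n → ℝ | ∀ i, 0 < κ i} (gfun n m) := by
  refine ⟨convex_pos_cone n, ?_⟩
  intro x hx y hy a b ha hb hab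
  simp only [Set.mem_setOf_eq] at hx hy
  simp only [smul_eq_mul]
  rcases eq_or_lt_of_le ha with rfl | ha'
  · simp only [zero_add] at hab
    subst hab
    simp
  rcases eq_or_lt_of_le hb with rfl | hb'
  · simp only [add_zero] at hab
    subst hab
    simp
  set A := gfun n m x with hA
  set B := gfun n m y with hB
  have hApos : 0 < A := gfun_pos hmn hx
  have hBpos : 0 < B := gfun_pos hmn hy
  set c := a * A + b * B with hc
  have hcpos : 0 < c := add_pos (mul_pos ha' hApos) (mul_pos hb' hBpos)
  -- normalized points
  set x' := A⁻¹ • x with hx'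
  set y' := B⁻¹ • y with hy'
  have hx'pos : ∀ i, 0 < x' i := fun i => by
    simp only [hx', Pi.smul_apply, smul_eq_mul]
    exact mul_pos (inv_pos.2 hApos) (hx i)
  have hy'pos : ∀ i, 0 < y' i := fun i => by
    simp only [hy', Pi.smul_apply, smul_eq_mul]
    exact mul_pos (inv_pos.2 hBpos) (hy i)
  have hgx' : gfun n m x' = 1 := by
    rw [hx', gfun_smul hm1 hmn (inv_pos.2 hApos) hx, ← hA, inv_mul_cancel₀ hApos.ne']
  have hgy' : gfun n m y' = 1 := by
    rw [hy', gfun_smul hm1 hmn (inv_pos.2 hBpos) hy, ← hB, inv_mul_cancel₀ hBpos.ne']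
  set a' := a * A / c with ha'def
  set b' := b * B / c with hb'def
  have ha'nn : 0 ≤ a' := by positivity
  have hb'nn : 0 ≤ b' := by positivity
  have hab' : a' + b' = 1 := by
    rw [ha'def, hb'def, ← add_div, hc, div_self hcpos.ne']
  have hkey := gfun_logconc hm1 hmn hx'pos hy'pos ha'nn hb'nn hab'
  rw [hgx', hgy', Real.one_rpow, Real.one_rpow, mul_one] at hkey
  have hcomb : a' • x' + b' • y' = c⁻¹ • (a • x + b • y) := by
    funext i
    simp only [Pi.add_apply, Pi.smul_apply, smul_eq_mul, hx', hy', ha'def, hb'def]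
    field_simp
  rw [hcomb] at hkey
  have hmix : ∀ i, 0 < (a • x + b • y) i := fun i =>
    convex_pos_cone n hx hy ha hb hab i
  rw [gfun_smul hm1 hmn (inv_pos.2 hcpos) hmix] at hkey
  -- hkey : 1 ≤ c⁻¹ * gfun n m (a • x + b • y)
  calc a * A + b * B = c := rfl
    _ ≤ gfun n m (a • x + b • y) := by
        have h2 : c * 1 ≤ c * (c⁻¹ * gfun n m (a • x + b • y)) :=
          mul_le_mul_of_nonneg_left hkey hcpos.le
        rw [mul_one, ← mul_assoc, mul_inv_cancel₀ hcpos.ne', one_mul] at h2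
        exact h2

lemma deriv_nonpos_of_antitoneOn {f : ℝ → ℝ} {δ L : ℝ} (hδ : 0 < δ)
    (hf : AntitoneOn f (Set.Ioo (-δ) δ)) (hL : HasDerivAt f L 0) : L ≤ 0 := by
  have h := hasDerivAt_iff_tendsto_slope.1 hL
  have hsub : Set.Ioi (0:ℝ) ⊆ {x | x ≠ 0} := fun x hx => ne_of_gt hx
  have h2 : Filter.Tendsto (slope f 0) (nhdsWithin 0 (Set.Ioi 0)) (nhds L) :=
    h.mono_left (nhdsWithin_mono _ hsub)
  refine le_of_tendsto h2 ?_
  filter_upwards [Ioo_mem_nhdsGT_of_mem (Set.left_mem_Ico.2 hδ)] with t ht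
  have h0 : (0:ℝ) ∈ Set.Ioo (-δ) δ := ⟨by linarith, hδ⟩
  have htI : t ∈ Set.Ioo (-δ) δ := ⟨by linarith [ht.1], ht.2⟩
  have hfle := hf h0 htI ht.1.le
  rw [slope_def_field]
  apply div_nonpos_of_nonpos_of_nonneg
  · linarith
  · linarith [ht.1]

lemma part2_ineq (n m : ℕ) (hm1 : 1 ≤ m) (hmn : m ≤ n)
    (κ : Fin n → ℝ) (hκ : ∀ i, 0 < κ i) (ξ : Fin n → ℝ) :
    ∑ p, ∑ q,
        (fderiv ℝ (fun x => fderiv ℝ (Fcurv n m) x (Pi.single q 1)) κ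
            (Pi.single p 1)) * ξ p * ξ q +
      2 * ∑ p, Fd n m κ p * (κ p)⁻¹ * (ξ p) ^ 2 ≥
    (2 / Fcurv n m κ) * (∑ p, Fd n m κ p * ξ p) ^ 2 := by
  have hn : 0 < n := lt_of_lt_of_le hm1 hmn
  have hsm : ∀ z : Fin n → ℝ, (∀ i, 0 < z i) → ContDiffAt ℝ 2 (Fcurv n m) z :=
    fun z hz => fcurv_contDiffAt hmn hz
  set y : Fin n → ℝ := fun p => (κ p)⁻¹ with hy
  set η : Fin n → ℝ := fun p => -(ξ p) * ((κ p)⁻¹) ^ 2 with hη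
  have hne : (Finset.univ : Finset (Fin n)).Nonempty := ⟨⟨0, hn⟩, Finset.mem_univ _⟩
  set δ := Finset.univ.inf' hne (fun p => y p / (|η p| + 1)) with hδdef
  have hypos : ∀ p, 0 < y p := fun p => inv_pos.2 (hκ p)
  have hδpos : 0 < δ := by
    rw [hδdef, Finset.lt_inf'_iff]
    intro p _
    have := hypos p
    positivity
  have hupos : ∀ t, |t| < δ → ∀ p, 0 < y p + t * η p := by
    intro t ht p
    have h1 : δ ≤ y p / (|η p| + 1) := Finset.inf'_le _ (Finset.mem_univ p)
    have h2 : |t| * (|η p| + 1) < δ * (|η p| + 1) :=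
      mul_lt_mul_of_pos_right ht (by positivity)
    have h3 : δ * (|η p| + 1) ≤ y p := (le_div_iff₀ (by positivity)).1 h1
    have h4 : |t * η p| ≤ |t| * (|η p| + 1) := by
      rw [abs_mul]
      nlinarith [abs_nonneg t, abs_nonneg (η p)]
    have h5 := neg_abs_le (t * η p)
    linarith
  set I : Set ℝ := Set.Ioo (-δ) δ with hIdef
  have h0I : (0:ℝ) ∈ I := ⟨by linarith, hδpos⟩
  set ct : ℝ → Fin n → ℝ := fun t p => (y p + t * η p)⁻¹ with hct
  have hmemI : ∀ t ∈ I, ∀ p, 0 < y p + t * η p := by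
    intro t ht p
    exact hupos t (abs_lt.2 ⟨ht.1, ht.2⟩) p
  have hctpos : ∀ t ∈ I, ∀ p, 0 < ct t p := fun t ht p => inv_pos.2 (hmemI t ht p)
  have hct0 : ct 0 = κ := by
    funext p
    simp [hct, hy]
  -- derivative of the curve
  set d1 : ℝ → Fin n → ℝ := fun t p => -(η p * ((y p + t * η p) ^ 2)⁻¹) with hd1
  have hctderiv : ∀ t ∈ I, HasDerivAt ct (d1 t) t := by
    intro t ht
    rw [hasDerivAt_pi]
    intro p
    have hu : HasDerivAt (fun s : ℝ => y p + s * η p) (η p) t := by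
      simpa using ((hasDerivAt_id t).mul_const (η p)).const_add (y p)
    have := hu.fun_inv (ne_of_gt (hmemI t ht p))
    show HasDerivAt (fun s : ℝ => (y p + s * η p)⁻¹) (-(η p * ((y p + t * η p) ^ 2)⁻¹)) t
    simpa [div_eq_mul_inv] using this
  have hd10 : d1 0 = ξ := by
    funext p
    show -(η p * ((y p + 0 * η p) ^ 2)⁻¹) = ξ p
    rw [hη, hy]
    have := (hκ p).ne'
    field_simp
    rw [mul_zero, neg_zero, add_zero, mul_div_assoc, div_self (pow_ne_zero 2 this), mul_one]
  -- ψ and its derivative on I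
  set ψ : ℝ → ℝ := fun t => Fcurv n m (ct t) with hψdef
  have hdiffFc : ∀ t ∈ I, DifferentiableAt ℝ (Fcurv n m) (ct t) := fun t ht =>
    (hsm (ct t) (hctpos t ht)).differentiableAt two_ne_zero
  set ψ1 : ℝ → ℝ := fun t => fderiv ℝ (Fcurv n m) (ct t) (d1 t) with hψ1def
  have hψderiv : ∀ t ∈ I, HasDerivAt ψ (ψ1 t) t := fun t ht =>
    ((hdiffFc t ht).hasFDerivAt).comp_hasDerivAt t (hctderiv t ht)
  have hψpos : ∀ t ∈ I, 0 < ψ t := fun t ht => fcurv_pos hmn (hctpos t ht)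
  -- second-order data at 0
  have hFc2κ : ContDiffAt ℝ 2 (Fcurv n m) κ := hsm κ hκ
  have hfd1 : ContDiffAt ℝ 1 (fderiv ℝ (Fcurv n m)) κ := hFc2κ.fderiv_right (by norm_num)
  have hfddiff : DifferentiableAt ℝ (fderiv ℝ (Fcurv n m)) κ := hfd1.differentiableAt one_ne_zero
  set B := fderiv ℝ (fderiv ℝ (Fcurv n m)) κ with hBdef
  have hB : HasFDerivAt (fderiv ℝ (Fcurv n m)) B κ := hfddiff.hasFDerivAt
  have hctd0 : HasDerivAt ct ξ 0 := hd10 ▸ hctderiv 0 h0I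
  have hB' : HasFDerivAt (fderiv ℝ (Fcurv n m)) B (ct 0) := by rw [hct0]; exact hB
  have hG : HasDerivAt (fun t => fderiv ℝ (Fcurv n m) (ct t)) (B ξ) 0 :=
    hB'.comp_hasDerivAt 0 hctd0
  -- derivative of d1 at 0
  set d2 : Fin n → ℝ := fun p => 2 * ξ p ^ 2 * (κ p)⁻¹ with hd2def
  have hd1deriv : HasDerivAt d1 d2 0 := by
    rw [hasDerivAt_pi]
    intro p
    have hu : HasDerivAt (fun s : ℝ => y p + s * η p) (η p) 0 := by
      simpa using ((hasDerivAt_id 0).mul_const (η p)).const_add (y p)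
    have hsq : HasDerivAt (fun s : ℝ => (y p + s * η p) ^ 2)
        (2 * (y p + 0 * η p) ^ 1 * η p) 0 := by
      simpa using hu.fun_pow 2
    have hne0 : (y p + 0 * η p) ^ 2 ≠ 0 := by
      have := hmemI 0 h0I p
      positivity
    have hinv := hsq.fun_inv hne0
    have hfin := (hinv.const_mul (η p)).neg
    have hval : -(η p * (-(2 * (y p + 0 * η p) ^ 1 * η p) / ((y p + 0 * η p) ^ 2) ^ 2)) = d2 p := by
      show -(η p * (-(2 * (y p + 0 * η p) ^ 1 * η p) / ((y p + 0 * η p) ^ 2) ^ 2))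
          = 2 * ξ p ^ 2 * (κ p)⁻¹
      rw [hη, hy]
      have := (hκ p).ne'
      field_simp
      ring_nf
      field_simp
    show HasDerivAt (fun t => -(η p * ((y p + t * η p) ^ 2)⁻¹)) (d2 p) 0
    rw [← hval]
    exact hfin
  have hψ1deriv : HasDerivAt ψ1 ((B ξ) ξ + (fderiv ℝ (Fcurv n m) κ) d2) 0 := by
    have h := hG.clm_apply hd1deriv
    rw [hd10, hct0] at h
    exact h
  -- φ = 1/ψ
  set φ : ℝ → ℝ := fun t => (ψ t)⁻¹ with hφdef
  set φ1 : ℝ → ℝ := fun t => -(ψ1 t) / (ψ t) ^ 2 with hφ1def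
  have hφderiv : ∀ t ∈ I, HasDerivAt φ (φ1 t) t := fun t ht =>
    (hψderiv t ht).inv (hψpos t ht).ne'
  -- φ is concave on I
  have hgconc := gfun_concave (n := n) (m := m) hm1 hmn
  set Lmap : ℝ →ᵃ[ℝ] (Fin n → ℝ) := AffineMap.lineMap y (y + η) with hLdef
  have hLapp : ∀ t p, Lmap t p = y p + t * η p := by
    intro t p
    simp [hLdef, AffineMap.lineMap_apply, Pi.add_apply, Pi.smul_apply, smul_eq_mul]
    ring
  have hφeq : (gfun n m ∘ Lmap) = φ := by
    funext t
    show (Fcurv n m fun i => ((Lmap t) i)⁻¹)⁻¹ = (Fcurv n m (ct t))⁻¹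
    congr 1
    congr 1
    funext p
    rw [hLapp t p]
  have hconcφ : ConcaveOn ℝ I φ := by
    have h1 : ConcaveOn ℝ (Lmap ⁻¹' {κ : Fin n → ℝ | ∀ i, 0 < κ i}) (gfun n m ∘ Lmap) :=
      hgconc.comp_affineMap Lmap
    have h2 : I ⊆ Lmap ⁻¹' {κ : Fin n → ℝ | ∀ i, 0 < κ i} := by
      intro t ht
      simp only [Set.mem_preimage, Set.mem_setOf_eq]
      intro p
      rw [hLapp t p]
      exact hmemI t ht p
    have h3 := h1.subset h2 (convex_Ioo _ _)
    rwa [hφeq] at h3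
  -- derivative of φ is antitone on I
  have hconvneg : ConvexOn ℝ I (-φ) := hconcφ.neg
  have hmono : MonotoneOn (deriv (-φ)) I :=
    hconvneg.monotoneOn_deriv (fun t ht => ((hφderiv t ht).neg).differentiableAt)
  have hderiv_eq : ∀ t ∈ I, deriv (-φ) t = -(φ1 t) := by
    intro t ht
    exact ((hφderiv t ht).neg).deriv
  have hanti : AntitoneOn φ1 I := by
    intro s hs t ht hst
    have h := hmono hs ht hst
    rw [hderiv_eq s hs, hderiv_eq t ht] at h
    linarith
  set L2 := (B ξ) ξ + (fderiv ℝ (Fcurv n m) κ) d2 with hL2def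
  have hφ1deriv : HasDerivAt φ1
      (((-L2) * (ψ 0) ^ 2 - (-(ψ1 0)) * (2 * (ψ 0) ^ 1 * (ψ1 0))) / ((ψ 0) ^ 2) ^ 2) 0 := by
    have hnum : HasDerivAt (fun t => -(ψ1 t)) (-L2) 0 := hψ1deriv.neg
    have hden : HasDerivAt (fun t => (ψ t) ^ 2) (2 * (ψ 0) ^ 1 * (ψ1 0)) 0 :=
      (hψderiv 0 h0I).pow 2
    have := hnum.div hden (by have := hψpos 0 h0I; positivity)
    exact this
  have hLφ := deriv_nonpos_of_antitoneOn hδpos hanti hφ1deriv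
  -- extract the second-order inequality
  have hψ0 : ψ 0 = Fcurv n m κ := by rw [hψdef]; simp only; rw [hct0]
  have hψ10 : ψ1 0 = fderiv ℝ (Fcurv n m) κ ξ := by
    rw [hψ1def]; simp only; rw [hct0, hd10]
  have hF0pos : 0 < Fcurv n m κ := fcurv_pos hmn hκ
  set S := fderiv ℝ (Fcurv n m) κ ξ with hSdef
  have hkey : 2 * S ^ 2 / Fcurv n m κ ≤ L2 := by
    have hden : (0:ℝ) < ((ψ 0) ^ 2) ^ 2 := by
      have := hψpos 0 h0I
      positivity
    have hnum : (-L2) * (ψ 0) ^ 2 - (-(ψ1 0)) * (2 * (ψ 0) ^ 1 * (ψ1 0)) ≤ 0 := by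
      by_contra hpos
      push_neg at hpos
      have := div_pos hpos hden
      linarith
    rw [hψ0, hψ10] at hnum
    rw [div_le_iff₀ hF0pos]
    have h2 : Fcurv n m κ * (2 * S ^ 2 - L2 * Fcurv n m κ) ≤ 0 := by
      calc Fcurv n m κ * (2 * S ^ 2 - L2 * Fcurv n m κ)
          = (-L2) * (Fcurv n m κ) ^ 2 - (-S) * (2 * (Fcurv n m κ) ^ 1 * S) := by ring
        _ ≤ 0 := hnum
    by_contra hcon
    push_neg at hcon
    have h3 : 0 < Fcurv n m κ * (2 * S ^ 2 - L2 * Fcurv n m κ) :=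
      mul_pos hF0pos (by linarith)
    linarith
  -- expansion into coordinates
  have hvsum : ∀ v : Fin n → ℝ, v = ∑ p, v p • (Pi.single p 1 : Fin n → ℝ) := by
    intro v
    funext j
    simp [Finset.sum_apply, Pi.single_apply]
  have happly : ∀ (T : (Fin n → ℝ) →L[ℝ] ℝ) (v : Fin n → ℝ),
      T v = ∑ p, T (Pi.single p 1) * v p := by
    intro T v
    conv_lhs => rw [hvsum v]
    rw [map_sum]
    refine Finset.sum_congr rfl fun p _ => ?_
    rw [map_smul, smul_eq_mul, mul_comm]
  have hexp1 : (B ξ) ξ = ∑ p, ∑ q, (B (Pi.single p 1)) (Pi.single q 1) * ξ p * ξ q := by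
    have hBv : B ξ = ∑ p, ξ p • B (Pi.single p 1) := by
      conv_lhs => rw [hvsum ξ]
      rw [map_sum]
      exact Finset.sum_congr rfl fun p _ => map_smul B _ _
    rw [hBv, ContinuousLinearMap.sum_apply]
    refine Finset.sum_congr rfl fun p _ => ?_
    rw [ContinuousLinearMap.smul_apply, smul_eq_mul,
      happly (B (Pi.single p 1)) ξ, Finset.mul_sum]
    refine Finset.sum_congr rfl fun q _ => ?_
    ring
  have hBentry : ∀ p q : Fin n, (B (Pi.single p 1)) (Pi.single q 1) =
      fderiv ℝ (fun x => fderiv ℝ (Fcurv n m) x (Pi.single q 1)) κ (Pi.single p 1) := by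
    intro p q
    have h := fderiv_clm_apply hfddiff (differentiableAt_const (Pi.single q 1))
    rw [h]
    simp [ContinuousLinearMap.flip_apply]
    rfl
  have hexp2 : (fderiv ℝ (Fcurv n m) κ) d2 = 2 * ∑ p, Fd n m κ p * (κ p)⁻¹ * ξ p ^ 2 := by
    rw [happly (fderiv ℝ (Fcurv n m) κ) d2, Finset.mul_sum]
    refine Finset.sum_congr rfl fun p _ => ?_
    show fderiv ℝ (Fcurv n m) κ (Pi.single p 1) * (2 * ξ p ^ 2 * (κ p)⁻¹)
        = 2 * (Fd n m κ p * (κ p)⁻¹ * ξ p ^ 2)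
    rw [Fd]
    ring
  have hexp3 : S = ∑ p, Fd n m κ p * ξ p := by
    rw [hSdef, happly (fderiv ℝ (Fcurv n m) κ) ξ]
    exact Finset.sum_congr rfl fun p _ => by rw [Fd]
  rw [ge_iff_le]
  calc (2 / Fcurv n m κ) * (∑ p, Fd n m κ p * ξ p) ^ 2
      = 2 * S ^ 2 / Fcurv n m κ := by rw [hexp3]; ring
    _ ≤ L2 := hkey
    _ = _ := by
        rw [hL2def, hexp1, hexp2]
        congr 1
        refine Finset.sum_congr rfl fun p _ => Finset.sum_congr rfl fun q _ => ?_
        rw [hBentry p q]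

theorem stmt_15 (n m : ℕ) (hm1 : 1 ≤ m) (hmn : m ≤ n)
    (κ : Fin n → ℝ) (hκ : ∀ i, 0 < κ i) (ξ : Fin n → ℝ) :
    ConcaveOn ℝ {κ : Fin n → ℝ | ∀ i, 0 < κ i}
      (fun κ => (Fcurv n m fun i => (κ i)⁻¹)⁻¹) ∧
    ∑ p, ∑ q,
        (fderiv ℝ (fun x => fderiv ℝ (Fcurv n m) x (Pi.single q 1)) κ
            (Pi.single p 1)) * ξ p * ξ q +
      2 * ∑ p, Fd n m κ p * (κ p)⁻¹ * (ξ p) ^ 2 ≥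
    (2 / Fcurv n m κ) * (∑ p, Fd n m κ p * ξ p) ^ 2 := by
  refine ⟨gfun_concave hm1 hmn, ?_⟩
  exact part2_ineq n m hm1 hmn κ hκ ξ
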